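/- Let v₁, v₂ ∈ ℝⁿ, let A and Y be real matrices indexed by pairs (a,r) with 1 ≤ a ≤ n and 1 ≤ r ≤ m, and let r₁, s₁, r₂, s₂ ∈ {1,…,m}. For a matrix M indexed by such pairs, define the n×n block M^{(r,s)} by (M^{(r,s)})_{ab} = M_{(a,r),(b,s)}. Then Tr((v₁v₁ᵀ ⊗ E^{r₁s₁}) · A · (v₂v₂ᵀ ⊗ E^{r₂s₂}) · Y) = ¼ [ (v₁ᵀ A^{(s₁,r₂)} v₂)(v₂ᵀ Y^{(s₂,r₁)} v₁) + (v₁ᵀ A^{(r₁,r₂)} v₂)(v₂ᵀ Y^{(s₂,s₁)} v₁) + (v₁ᵀ A^{(s₁,s₂)} v₂)(v₂ᵀ Y^{(r₂,r₁)} v₁) + (v₁ᵀ A^{(r₁,s₂)} v₂)(v₂ᵀ Y^{(r₂,s₁)} v₁) ]. -/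

import Mathlib

/-!
Writing `E^{rs} = ½ (e_r e_sᵀ + e_s e_rᵀ)` makes each factor `v vᵀ ⊗ E^{rs}` the half-sum of the
rank-one matrices `(v ⊗ e_r)(v ⊗ e_s)ᵀ` and `(v ⊗ e_s)(v ⊗ e_r)ᵀ`. The trace of `x yᵀ A z wᵀ Y` factors as
`(yᵀ A z)(wᵀ Y x)`, and `(v ⊗ e_s)ᵀ M (w ⊗ e_r) = vᵀ M^{(s,r)} w`, so expanding the product gives
the four terms.
-/

open Matrix Kronecker

/-- The symmetrized unit matrix `E^{rs}` with entries `(E^{rs})_{ij} = ½(δ_{ri}δ_{sj} + δ_{si}δ_{rj})`. -/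
noncomputable def symUnit (m : ℕ) (r s : Fin m) : Matrix (Fin m) (Fin m) ℝ :=
  Matrix.of fun i j =>
    (1 / 2 : ℝ) * ((if r = i ∧ s = j then 1 else 0) + (if s = i ∧ r = j then 1 else 0))

/-- The `(r, s)` block of a matrix indexed by pairs `(a, r)`. -/
def blk {n m : ℕ} (M : Matrix (Fin n × Fin m) (Fin n × Fin m) ℝ) (r s : Fin m) :
    Matrix (Fin n) (Fin n) ℝ :=
  Matrix.of fun a b => M (a, r) (b, s)

namespace Matrix

variable {R ι κ : Type*}

def vecKronecker [Mul R] (v : ι → R) (w : κ → R) : ι × κ → R :=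
  fun p => v p.1 * w p.2

theorem vecMulVec_kronecker_vecMulVec [CommSemiring R] (x y : ι → R) (z w : κ → R) :
    vecMulVec x y ⊗ₖ vecMulVec z w = vecMulVec (vecKronecker x z) (vecKronecker y w) := by
  ext ⟨a, i⟩ ⟨b, j⟩
  simp only [kroneckerMap_apply, vecMulVec_apply, vecKronecker]
  ring

theorem trace_vecMulVec_mul_vecMulVec_mul [CommSemiring R] [Fintype ι]
    (x y z w : ι → R) (A Y : Matrix ι ι R) :
    (vecMulVec x y * A * vecMulVec z w * Y).trace = (y ⬝ᵥ A *ᵥ z) * (w ⬝ᵥ Y *ᵥ x) := by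
  rw [vecMulVec_mul, vecMulVec_mul_vecMulVec, vecMulVec_mul, trace_vecMulVec, smul_vecMul,
    dotProduct_smul, smul_eq_mul, dotProduct_mulVec, dotProduct_mulVec, dotProduct_comm x]

end Matrix

open Matrix

theorem symUnit_eq_half_smul (m : ℕ) (r s : Fin m) :
    symUnit m r s = (1 / 2 : ℝ) • (single r s 1 + single s r 1) := by
  ext i j
  simp only [symUnit, of_apply, Matrix.smul_apply, Matrix.add_apply, single_apply, smul_eq_mul]

theorem vecMulVec_kronecker_symUnit {ι : Type*} {m : ℕ} (x y : ι → ℝ) (r s : Fin m) :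
    vecMulVec x y ⊗ₖ symUnit m r s = (1 / 2 : ℝ) •
      (vecMulVec (vecKronecker x (Pi.single r 1)) (vecKronecker y (Pi.single s 1)) +
        vecMulVec (vecKronecker x (Pi.single s 1)) (vecKronecker y (Pi.single r 1))) := by
  rw [symUnit_eq_half_smul, single_eq_single_vecMulVec_single, single_eq_single_vecMulVec_single,
    kronecker_smul, kronecker_add, vecMulVec_kronecker_vecMulVec, vecMulVec_kronecker_vecMulVec]

theorem vecKronecker_single_dotProduct_mulVec {n m : ℕ} (v w : Fin n → ℝ) (r s : Fin m)
    (M : Matrix (Fin n × Fin m) (Fin n × Fin m) ℝ) :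
    vecKronecker v (Pi.single r 1) ⬝ᵥ M *ᵥ vecKronecker w (Pi.single s 1) =
      v ⬝ᵥ blk M r s *ᵥ w := by
  simp [dotProduct, mulVec, vecKronecker, blk, Fintype.sum_prod_type, Pi.single_apply,
    Finset.mul_sum]

/-- The Schur complement pairing formula:
`Tr((v₁v₁ᵀ ⊗ E^{r₁s₁}) A (v₂v₂ᵀ ⊗ E^{r₂s₂}) Y)` equals a quarter of the sum of four
products of bilinear pairings of blocks of `A` and `Y`. -/
theorem trace_kronecker_symUnit_pairing
    (n m : ℕ) (v₁ v₂ : Fin n → ℝ)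
    (A Y : Matrix (Fin n × Fin m) (Fin n × Fin m) ℝ)
    (r₁ s₁ r₂ s₂ : Fin m) :
    ((Matrix.vecMulVec v₁ v₁ ⊗ₖ symUnit m r₁ s₁) * A *
        (Matrix.vecMulVec v₂ v₂ ⊗ₖ symUnit m r₂ s₂) * Y).trace =
      (1 / 4 : ℝ) *
        ((v₁ ⬝ᵥ (blk A s₁ r₂).mulVec v₂) * (v₂ ⬝ᵥ (blk Y s₂ r₁).mulVec v₁) +
         (v₁ ⬝ᵥ (blk A r₁ r₂).mulVec v₂) * (v₂ ⬝ᵥ (blk Y s₂ s₁).mulVec v₁) +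
         (v₁ ⬝ᵥ (blk A s₁ s₂).mulVec v₂) * (v₂ ⬝ᵥ (blk Y r₂ r₁).mulVec v₁) +
         (v₁ ⬝ᵥ (blk A r₁ s₂).mulVec v₂) * (v₂ ⬝ᵥ (blk Y r₂ s₁).mulVec v₁)) := by
  simp only [vecMulVec_kronecker_symUnit, smul_mul_assoc, mul_smul_comm, add_mul, mul_add,
    trace_smul, trace_add, smul_eq_mul, trace_vecMulVec_mul_vecMulVec_mul,
    vecKronecker_single_dotProduct_mulVec]
  ring
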